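/- Per-neighbor cost bound: for every node i ∉ {u,v}, ‖h i − h' i‖₁ ≤ (a u i / √(d i + c i)) · ‖x̃_{uv} − x̃ u‖₁ + (a v i / √(d i + c i)) · ‖x̃_{uv} − x̃ v‖₁; moreover, if a u i = 0 or a v i = 0 then this inequality holds with equality. -/
import Mathlib


open Finset

/-- ℓ¹ norm on `Fin f → ℝ`. -/
noncomputable def norm1 {f : ℕ} (w : Fin f → ℝ) : ℝ := ∑ k, |w k|

/-- Coarse graph convolution representation of node `i`. -/
noncomputable def hrep {V : Type*} [Fintype V] [DecidableEq V] {f : ℕ}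
    (x : V → Fin f → ℝ) (a : V → V → ℝ) (c d : V → ℝ) (i : V) : Fin f → ℝ :=
  (c i / (d i + c i)) • x i +
    (1 / Real.sqrt (d i + c i)) •
      ∑ j ∈ ({i} : Finset V)ᶜ, (a j i / Real.sqrt (d j + c j)) • x j

/-- Feature of the supernode obtained by merging `u` and `v`. -/
noncomputable def xmerge {V : Type*} {f : ℕ}
    (x : V → Fin f → ℝ) (c : V → ℝ) (u v : V) : Fin f → ℝ :=
  (1 / (c u + c v)) • (c u • x u + c v • x v)

/-- Post-merge representation of the supernode `(u,v)`. -/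
noncomputable def hmerge {V : Type*} [Fintype V] [DecidableEq V] {f : ℕ}
    (x : V → Fin f → ℝ) (a : V → V → ℝ) (c d : V → ℝ) (u v : V) : Fin f → ℝ :=
  ((c u + c v) / (d u + d v + c u + c v)) • xmerge x c u v +
    (1 / Real.sqrt (d u + d v + c u + c v)) •
      ∑ j ∈ ({u, v} : Finset V)ᶜ, ((a j u + a j v) / Real.sqrt (d j + c j)) • x j

/-- Post-merge representation of a node `i ∉ {u,v}`. -/
noncomputable def hpost {V : Type*} [Fintype V] [DecidableEq V] {f : ℕ}
    (x : V → Fin f → ℝ) (a : V → V → ℝ) (c d : V → ℝ) (u v i : V) : Fin f → ℝ :=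
  (c i / (d i + c i)) • x i +
    (1 / Real.sqrt (d i + c i)) •
      (∑ j ∈ ({u, v, i} : Finset V)ᶜ, (a j i / Real.sqrt (d j + c j)) • x j +
        ((a u i + a v i) / Real.sqrt (d u + d v + c u + c v)) • xmerge x c u v)

/-- The merge cost `cost(u,v)`. -/
noncomputable def mergeCost {V : Type*} [Fintype V] [DecidableEq V] {f : ℕ}
    (x : V → Fin f → ℝ) (a : V → V → ℝ) (c d : V → ℝ) (u v : V) : ℝ :=
  norm1 (hrep x a c d u - hmerge x a c d u v) +
    norm1 (hrep x a c d v - hmerge x a c d u v) +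
    ∑ i ∈ ({u, v} : Finset V)ᶜ, norm1 (hrep x a c d i - hpost x a c d u v i)

/-- Normalized features of node `i`. -/
noncomputable def xtil {V : Type*} {f : ℕ}
    (x : V → Fin f → ℝ) (c d : V → ℝ) (i : V) : Fin f → ℝ :=
  (1 / Real.sqrt (d i + c i)) • x i

/-- Normalized features of the supernode `(u,v)`. -/
noncomputable def xtilMerge {V : Type*} {f : ℕ}
    (x : V → Fin f → ℝ) (c d : V → ℝ) (u v : V) : Fin f → ℝ :=
  (1 / Real.sqrt (d u + d v + c u + c v)) • xmerge x c u v

/-- Cached sum statistic of node `w`. -/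
noncomputable def svec {V : Type*} [Fintype V] [DecidableEq V] {f : ℕ}
    (x : V → Fin f → ℝ) (a : V → V → ℝ) (c d : V → ℝ) (w : V) : Fin f → ℝ :=
  ∑ j ∈ ({w} : Finset V)ᶜ, (a j w / Real.sqrt (d j + c j)) • x j

/-- Influence of node `w`. -/
noncomputable def infl {V : Type*} [Fintype V] [DecidableEq V]
    (a : V → V → ℝ) (c d : V → ℝ) (w : V) : ℝ :=
  ∑ j ∈ ({w} : Finset V)ᶜ, a w j / Real.sqrt (d j + c j)

lemma norm1_neg_sub {f : ℕ} (w z : Fin f → ℝ) : norm1 (w - z) = norm1 (z - w) := by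
  unfold norm1
  exact Finset.sum_congr rfl fun k _ => by simp [abs_sub_comm]

lemma norm1_smul {f : ℕ} {t : ℝ} (ht : 0 ≤ t) (w : Fin f → ℝ) :
    norm1 (t • w) = t * norm1 w := by
  unfold norm1
  rw [Finset.mul_sum]
  exact Finset.sum_congr rfl fun k _ => by
    simp [abs_mul, abs_of_nonneg ht]

lemma norm1_add_le {f : ℕ} (w z : Fin f → ℝ) : norm1 (w + z) ≤ norm1 w + norm1 z := by
  unfold norm1
  rw [← Finset.sum_add_distrib]
  exact Finset.sum_le_sum fun k _ => abs_add_le _ _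

lemma key_identity {V : Type*} [Fintype V] [DecidableEq V] {f : ℕ}
    (x : V → Fin f → ℝ) (a : V → V → ℝ) (c d : V → ℝ)
    (u v i : V) (huv : u ≠ v) (hiu : i ≠ u) (hiv : i ≠ v) :
    hrep x a c d i - hpost x a c d u v i =
      (a u i / Real.sqrt (d i + c i)) • (xtil x c d u - xtilMerge x c d u v) +
      (a v i / Real.sqrt (d i + c i)) • (xtil x c d v - xtilMerge x c d u v) := by
  have hsub : ({u, v} : Finset V) ⊆ ({i} : Finset V)ᶜ := by
    intro j hj
    simp only [Finset.mem_insert, Finset.mem_singleton] at hj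
    simp only [Finset.mem_compl, Finset.mem_singleton]
    rcases hj with rfl | rfl
    · exact fun h => hiu h.symm
    · exact fun h => hiv h.symm
  have hset : ({u, v, i} : Finset V)ᶜ = ({i} : Finset V)ᶜ \ ({u, v} : Finset V) := by
    ext j
    simp only [Finset.mem_compl, Finset.mem_insert, Finset.mem_singleton,
      Finset.mem_sdiff]
    tauto
  have hS : (∑ j ∈ ({i} : Finset V)ᶜ, (a j i / Real.sqrt (d j + c j)) • x j)
      = (∑ j ∈ ({u, v, i} : Finset V)ᶜ, (a j i / Real.sqrt (d j + c j)) • x j)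
        + ((a u i / Real.sqrt (d u + c u)) • x u
          + (a v i / Real.sqrt (d v + c v)) • x v) := by
    rw [hset, ← Finset.sum_sdiff hsub, Finset.sum_pair huv]
  unfold hrep hpost xtil xtilMerge
  rw [hS]
  funext k
  simp only [Pi.add_apply, Pi.sub_apply, Pi.smul_apply, smul_eq_mul, Finset.sum_apply]
  ring

theorem per_neighbor_cost_bound
    {V : Type*} [Fintype V] [DecidableEq V] {f : ℕ}
    (x : V → Fin f → ℝ) (a : V → V → ℝ)
    (hsymm : ∀ i j, a j i = a i j) (hnonneg : ∀ i j, 0 ≤ a i j)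
    (hdiag : ∀ i, a i i = 0)
    (c : V → ℝ) (hc : ∀ i, 1 ≤ c i)
    (d : V → ℝ) (hd : ∀ i, d i = ∑ j, a j i)
    (u v : V) (huv : u ≠ v)
    (i : V) (hiu : i ≠ u) (hiv : i ≠ v) :
    norm1 (hrep x a c d i - hpost x a c d u v i) ≤
      (a u i / Real.sqrt (d i + c i)) * norm1 (xtilMerge x c d u v - xtil x c d u) +
        (a v i / Real.sqrt (d i + c i)) * norm1 (xtilMerge x c d u v - xtil x c d v) ∧
      ((a u i = 0 ∨ a v i = 0) →
        norm1 (hrep x a c d i - hpost x a c d u v i) =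
          (a u i / Real.sqrt (d i + c i)) * norm1 (xtilMerge x c d u v - xtil x c d u) +
            (a v i / Real.sqrt (d i + c i)) * norm1 (xtilMerge x c d u v - xtil x c d v)) := by
  have hu0 : 0 ≤ a u i / Real.sqrt (d i + c i) :=
    div_nonneg (hnonneg u i) (Real.sqrt_nonneg _)
  have hv0 : 0 ≤ a v i / Real.sqrt (d i + c i) :=
    div_nonneg (hnonneg v i) (Real.sqrt_nonneg _)
  have hk := key_identity x a c d u v i huv hiu hiv
  constructor
  · rw [hk]
    calc norm1 ((a u i / Real.sqrt (d i + c i)) • (xtil x c d u - xtilMerge x c d u v)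
          + (a v i / Real.sqrt (d i + c i)) • (xtil x c d v - xtilMerge x c d u v))
        ≤ norm1 ((a u i / Real.sqrt (d i + c i)) • (xtil x c d u - xtilMerge x c d u v))
          + norm1 ((a v i / Real.sqrt (d i + c i)) • (xtil x c d v - xtilMerge x c d u v)) :=
          norm1_add_le _ _
      _ = _ := by
          rw [norm1_smul hu0, norm1_smul hv0, norm1_neg_sub (xtil x c d u),
            norm1_neg_sub (xtil x c d v)]
  · rintro (h0 | h0) <;> rw [hk, h0] <;>
      simp only [zero_div, zero_smul, zero_add, add_zero, zero_mul, mul_zero]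
    · rw [norm1_smul hv0, norm1_neg_sub (xtil x c d v)]
    · rw [norm1_smul hu0, norm1_neg_sub (xtil x c d u)]
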